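/- arXiv:2311.16440 — 2 statements merged into one kernel-verified Lean document; each statement's English description precedes it below -/
import Mathlib

section
/- Let r, R be positive integers, A an r×r real symmetric positive definite matrix, and H an R×r real matrix. Then for every real x > 0, the rescaled Tikhonov-regularization function admits the ridge-regularization decomposition f̃(x) := Hᵀ (H A Hᵀ + x I_R)⁻¹ H = A⁻¹ − x · A⁻¹ (x I_r + A Hᵀ H)⁻¹, where x I_r + A Hᵀ H is invertible. -/
/-!
Write `N = x I + A Hᵀ H`. The push-through identity `(x I + H A Hᵀ) H = H N` turns the left side
into `Hᵀ H N⁻¹`, and `A⁻¹ - x A⁻¹ N⁻¹ = A⁻¹ (N - x I) N⁻¹ = Hᵀ H N⁻¹`. The matrix `H A Hᵀ + x I`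
is positive definite, and the Weinstein–Aronszajn identity `det (1 + B C) = det (1 + C B)`
transfers its invertibility to `N`.
-/

open Matrix

namespace Matrix

variable {m n K : Type*} [Fintype m] [Fintype n] [DecidableEq m] [DecidableEq n]

section CommRing

variable [CommRing K]

theorem smul_one_add_mul_mul_comm (x : K) (B : Matrix m n K) (C : Matrix n m K) :
    (x • 1 + B * C) * B = B * (x • 1 + C * B) := by
  simp only [Matrix.add_mul, Matrix.mul_add, Matrix.smul_mul, Matrix.mul_smul, Matrix.one_mul,
    Matrix.mul_one, Matrix.mul_assoc]

theorem inv_mul_eq_mul_inv_of_mul_eq {M : Matrix m m K} {N : Matrix n n K} {B : Matrix m n K}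
    (hM : IsUnit M) (hN : IsUnit N) (h : M * B = B * N) : M⁻¹ * B = B * N⁻¹ := by
  rw [isUnit_iff_isUnit_det] at hM hN
  calc M⁻¹ * B = M⁻¹ * (M * B) * N⁻¹ := by
        rw [h, Matrix.mul_assoc, Matrix.mul_assoc, mul_nonsing_inv _ hN, Matrix.mul_one]
    _ = B * N⁻¹ := by rw [nonsing_inv_mul_cancel_left _ _ hM]

omit [Fintype m] [DecidableEq m] in
theorem inv_sub_smul_inv_mul_inv_smul_one_add_mul {A G : Matrix n n K} (hA : IsUnit A) (x : K)
    (hN : IsUnit (x • 1 + A * G)) :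
    A⁻¹ - x • (A⁻¹ * (x • 1 + A * G)⁻¹) = G * (x • 1 + A * G)⁻¹ := by
  rw [isUnit_iff_isUnit_det] at hA hN
  calc A⁻¹ - x • (A⁻¹ * (x • 1 + A * G)⁻¹)
      = A⁻¹ * ((x • 1 + A * G) - x • 1) * (x • 1 + A * G)⁻¹ := by
        rw [Matrix.mul_sub, Matrix.sub_mul, Matrix.mul_assoc, mul_nonsing_inv _ hN,
          Matrix.mul_one, Matrix.mul_smul, Matrix.mul_one, Matrix.smul_mul]
    _ = G * (x • 1 + A * G)⁻¹ := by
        rw [add_sub_cancel_left, nonsing_inv_mul_cancel_left _ _ hA]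

end CommRing

section Field

variable [Field K] {x : K}

omit [Fintype m] [DecidableEq n] in
theorem smul_one_add_mul_eq_smul (hx : x ≠ 0) (B : Matrix m n K) (C : Matrix n m K) :
    x • 1 + B * C = x • (1 + (x⁻¹ • B) * C) := by
  rw [smul_add, Matrix.smul_mul, smul_smul, mul_inv_cancel₀ hx, one_smul]

theorem isUnit_smul_one_add_mul_comm (hx : x ≠ 0) (B : Matrix m n K) (C : Matrix n m K) :
    IsUnit (x • 1 + B * C) ↔ IsUnit (x • 1 + C * B) := by
  have hxu : ∀ k : ℕ, IsUnit (x ^ k) := fun k => hx.isUnit.pow k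
  rw [isUnit_iff_isUnit_det, isUnit_iff_isUnit_det, smul_one_add_mul_eq_smul hx,
    smul_one_add_mul_eq_smul hx, det_smul, det_smul, IsUnit.mul_iff, IsUnit.mul_iff,
    det_one_add_mul_comm, Matrix.mul_smul, Matrix.smul_mul]
  simp only [hxu, true_and]

end Field

end Matrix

theorem rescaled_tikhonov_ridge_decomposition_general (r R : ℕ)
    (A : Matrix (Fin r) (Fin r) ℝ) (hA : A.PosDef)
    (H : Matrix (Fin R) (Fin r) ℝ) :
    ∀ x : ℝ, 0 < x →
      IsUnit (x • (1 : Matrix (Fin r) (Fin r) ℝ) + A * Hᵀ * H) ∧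
      Hᵀ * (H * A * Hᵀ + x • (1 : Matrix (Fin R) (Fin R) ℝ))⁻¹ * H
        = A⁻¹ - x • (A⁻¹ * (x • (1 : Matrix (Fin r) (Fin r) ℝ) + A * Hᵀ * H)⁻¹) := by
  intro x hx
  have hM : IsUnit (x • 1 + H * (A * Hᵀ)) := by
    have hpos : (H * A * Hᵀ + x • 1).PosDef :=
      PosDef.posSemidef_add (by simpa using hA.posSemidef.mul_mul_conjTranspose_same H)
        (PosDef.one.smul hx)
    rw [add_comm, ← Matrix.mul_assoc]
    exact hpos.isUnit
  have hN : IsUnit (x • 1 + A * Hᵀ * H) :=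
    (isUnit_smul_one_add_mul_comm hx.ne' (A * Hᵀ) H).mpr hM
  refine ⟨hN, ?_⟩
  have lhs_eq : Hᵀ * (H * A * Hᵀ + x • 1)⁻¹ * H = Hᵀ * H * (x • 1 + A * Hᵀ * H)⁻¹ := by
    rw [add_comm, Matrix.mul_assoc H, Matrix.mul_assoc Hᵀ,
      inv_mul_eq_mul_inv_of_mul_eq hM hN (smul_one_add_mul_mul_comm x H (A * Hᵀ)),
      ← Matrix.mul_assoc]
  rw [lhs_eq, Matrix.mul_assoc A,
    inv_sub_smul_inv_mul_inv_smul_one_add_mul hA.isUnit x (by rwa [← Matrix.mul_assoc])]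

/-- Ridge-regularization decomposition of the rescaled Tikhonov-regularization function:
for `A` an `r × r` real symmetric positive definite matrix, `H` an `R × r` real matrix and
`x > 0`, `x I_r + A Hᵀ H` is invertible and
`f̃(x) = Hᵀ (H A Hᵀ + x I_R)⁻¹ H = A⁻¹ − x · A⁻¹ (x I_r + A Hᵀ H)⁻¹`. -/
theorem rescaled_tikhonov_ridge_decomposition (r R : ℕ) (hr : 0 < r) (hR : 0 < R)
    (A : Matrix (Fin r) (Fin r) ℝ) (hA : A.PosDef)
    (H : Matrix (Fin R) (Fin r) ℝ) :
    ∀ x : ℝ, 0 < x →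
      IsUnit (x • (1 : Matrix (Fin r) (Fin r) ℝ) + A * Hᵀ * H) ∧
      Hᵀ * (H * A * Hᵀ + x • (1 : Matrix (Fin R) (Fin R) ℝ))⁻¹ * H
        = A⁻¹ - x • (A⁻¹ * (x • (1 : Matrix (Fin r) (Fin r) ℝ) + A * Hᵀ * H)⁻¹) :=
  rescaled_tikhonov_ridge_decomposition_general r R A hA H
end

section
/- Let r, R be positive integers with R ≥ r, A an r×r real symmetric positive definite matrix, and H an R×r real matrix of rank r (equivalently, Hᵀ H is invertible). Then the rescaled Tikhonov-regularization function f̃(x) := Hᵀ (H A Hᵀ + x I_R)⁻¹ H is continuous on a right-neighborhood of zero and converges to A⁻¹ as x → 0⁺: f̃(x) → A⁻¹ in matrix norm as x tends to 0 from the right. -/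
/-!
Since `(H A Hᵀ + x) H = H (A + x (HᵀH)⁻¹) (HᵀH)`, pushing `H` through the inverse gives
`Hᵀ (H A Hᵀ + x)⁻¹ H = (A + x (HᵀH)⁻¹)⁻¹` for `x > 0`. As `(HᵀH)⁻¹` is positive semidefinite,
`A + x (HᵀH)⁻¹` is positive definite for all `x ≥ 0`, so its inverse is continuous on `[0, ∞)`
and equals `A⁻¹` at `x = 0`.
-/

namespace Matrix

variable {m n α : Type*} [Fintype m] [Fintype n] [DecidableEq m] [DecidableEq n]

theorem isUnit_of_rank_eq_card [Field α] {A : Matrix n n α} (h : A.rank = Fintype.card n) :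
    IsUnit A := by
  rw [← mulVec_surjective_iff_isUnit]
  change Function.Surjective A.mulVecLin
  rw [← LinearMap.range_eq_top]
  exact Submodule.eq_top_of_finrank_eq (by rw [← rank, h, Module.finrank_fintype_fun_eq_card])

theorem mul_inv_add_smul_one_mul [CommRing α] (G : Matrix n m α) (H : Matrix m n α)
    (A : Matrix n n α) (c : α) (hGH : IsUnit (G * H)) (hM : IsUnit (H * A * G + c • 1)) :
    G * (H * A * G + c • 1)⁻¹ * H = (A + c • (G * H)⁻¹)⁻¹ := by
  set M := H * A * G + c • 1
  set B := A + c • (G * H)⁻¹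
  have hGHdet := (isUnit_iff_isUnit_det _).mp hGH
  have hMH : M * H = H * B * (G * H) := by
    rw [Matrix.mul_assoc H, add_mul, smul_mul, nonsing_inv_mul _ hGHdet]
    simp only [M, Matrix.add_mul, Matrix.mul_add, Matrix.smul_mul, Matrix.mul_smul,
      Matrix.mul_assoc, Matrix.mul_one, Matrix.one_mul]
  refine (inv_eq_left_inv ?_).symm
  calc G * M⁻¹ * H * B
      = G * M⁻¹ * (H * B * (G * H)) * (G * H)⁻¹ := by
        simp only [Matrix.mul_assoc, mul_nonsing_inv _ hGHdet, Matrix.mul_one]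
    _ = 1 := by
        rw [← hMH, ← Matrix.mul_assoc, Matrix.mul_assoc G,
          nonsing_inv_mul _ ((isUnit_iff_isUnit_det _).mp hM), Matrix.mul_one,
          mul_nonsing_inv _ hGHdet]

open scoped ComplexOrder in
theorem continuousOn_inv_add_smul {𝕜 : Type*} [RCLike 𝕜] {A P : Matrix n n 𝕜} (hA : A.PosDef)
    (hP : P.PosSemidef) : ContinuousOn (fun x : ℝ => (A + x • P)⁻¹) (Set.Ici 0) := by
  intro x hx
  have hdet : IsUnit (A + x • P).det :=
    (isUnit_iff_isUnit_det _).mp (hA.add_posSemidef (hP.smul hx)).isUnit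
  refine ((continuousAt_matrix_inv _ ?_).comp ?_).continuousWithinAt
  · exact NormedRing.inverse_continuousAt hdet.unit
  · exact (continuous_const.add (continuous_id.smul continuous_const)).continuousAt

end Matrix

open Matrix

theorem rescaled_tikhonov_tendsto_inv_general (r R : ℕ)
    (A : Matrix (Fin r) (Fin r) ℝ) (hA : A.PosDef)
    (H : Matrix (Fin R) (Fin r) ℝ) (hH : H.rank = r) :
    ∃ ε : ℝ, 0 < ε ∧
      ContinuousOn
        (fun x : ℝ => Hᵀ * (H * A * Hᵀ + x • (1 : Matrix (Fin R) (Fin R) ℝ))⁻¹ * H)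
        (Set.Ioo 0 ε) ∧
      Filter.Tendsto
        (fun x : ℝ => Hᵀ * (H * A * Hᵀ + x • (1 : Matrix (Fin R) (Fin R) ℝ))⁻¹ * H)
        (nhdsWithin 0 (Set.Ioi 0)) (nhds A⁻¹) := by
  have hHt : Hᴴ = Hᵀ := conjTranspose_eq_transpose_of_trivial H
  have hK : IsUnit (Hᵀ * H) :=
    isUnit_of_rank_eq_card (by rw [rank_transpose_mul_self, hH, Fintype.card_fin])
  have hKinv : (Hᵀ * H)⁻¹.PosSemidef := by
    simpa [hHt] using (posSemidef_conjTranspose_mul_self H).inv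
  have hf : ∀ x ∈ Set.Ioi (0 : ℝ),
      Hᵀ * (H * A * Hᵀ + x • (1 : Matrix (Fin R) (Fin R) ℝ))⁻¹ * H
        = (A + x • (Hᵀ * H)⁻¹)⁻¹ := by
    intro x hx
    refine mul_inv_add_smul_one_mul _ _ _ _ hK (PosDef.isUnit ?_)
    rw [← hHt]
    exact .posSemidef_add (hA.posSemidef.mul_mul_conjTranspose_same H) (PosDef.one.smul hx)
  have hg := continuousOn_inv_add_smul hA hKinv
  refine ⟨1, one_pos, (hg.mono fun x hx => le_of_lt hx.1).congr fun x hx => hf x hx.1, ?_⟩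
  have hg0 : (A + (0 : ℝ) • (Hᵀ * H)⁻¹)⁻¹ = A⁻¹ := by rw [zero_smul, add_zero]
  rw [← hg0]
  exact ((hg 0 Set.self_mem_Ici).mono Set.Ioi_subset_Ici_self).tendsto.congr'
    (eventually_nhdsWithin_of_forall fun x hx => (hf x hx).symm)

/-- Continuity of the rescaled Tikhonov-regularization function near `0` and its limit:
for `R ≥ r`, `A` an `r × r` real symmetric positive definite matrix, and `H` an `R × r`
real matrix of rank `r`, the function `f̃(x) = Hᵀ (H A Hᵀ + x I_R)⁻¹ H` is continuous on a
right-neighborhood of zero and tends to `A⁻¹` as `x → 0⁺`. -/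
theorem rescaled_tikhonov_tendsto_inv (r R : ℕ) (hr : 0 < r) (hrR : r ≤ R)
    (A : Matrix (Fin r) (Fin r) ℝ) (hA : A.PosDef)
    (H : Matrix (Fin R) (Fin r) ℝ) (hH : H.rank = r) :
    ∃ ε : ℝ, 0 < ε ∧
      ContinuousOn
        (fun x : ℝ => Hᵀ * (H * A * Hᵀ + x • (1 : Matrix (Fin R) (Fin R) ℝ))⁻¹ * H)
        (Set.Ioo 0 ε) ∧
      Filter.Tendsto
        (fun x : ℝ => Hᵀ * (H * A * Hᵀ + x • (1 : Matrix (Fin R) (Fin R) ℝ))⁻¹ * H)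
        (nhdsWithin 0 (Set.Ioi 0)) (nhds A⁻¹) :=
  rescaled_tikhonov_tendsto_inv_general r R A hA H hH
end
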